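/- Let i, j ∈ S be distinct. Then K_{·i} = K_{·j} (equality of the two columns of the Martin kernel) if and only if ρ(A) = 0, both i and j are recurrent, and i and j are in the same recurrence class. -/

import Mathlib

open Filter Topology

noncomputable section

namespace MaxPlus

variable {S : Type*}

/-- Weight of the path `p 0, p 1, ..., p n` for the kernel `A`. -/
def pathWeight (A : S → S → EReal) (p : ℕ → S) (n : ℕ) : EReal :=
  ∑ k ∈ Finset.range n, A (p k) (p (k + 1))

/-- The max-plus star kernel `A*`: supremum of weights of paths of length `≥ 0`. -/
def star (A : S → S → EReal) (i j : S) : EReal :=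
  ⨆ (n : ℕ) (p : ℕ → S) (_ : p 0 = i ∧ p n = j), pathWeight A p n

/-- The max-plus kernel `A⁺`: supremum of weights of paths of length `≥ 1`. -/
def plus (A : S → S → EReal) (i j : S) : EReal :=
  ⨆ (n : ℕ) (_ : 1 ≤ n) (p : ℕ → S) (_ : p 0 = i ∧ p n = j), pathWeight A p n

/-- `π` is a left super-harmonic row vector (with full support, being real valued). -/
def LeftSuperharmonic (A : S → S → EReal) (π : S → ℝ) : Prop :=
  ∀ j, (⨆ i, ((π i : EReal) + A i j)) ≤ (π j : EReal)

/-- The Martin kernel `K_{ij} = A*_{ij} - π_j`. -/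
def K (A : S → S → EReal) (π : S → ℝ) (i j : S) : EReal :=
  star A i j - (π j : EReal)

/-- `K♭_{ij} = A⁺_{ij} - π_j`. -/
def Kflat (A : S → S → EReal) (π : S → ℝ) (i j : S) : EReal :=
  plus A i j - (π j : EReal)

/-- The set `𝒦` of columns of the Martin kernel. -/
def kerCols (A : S → S → EReal) (π : S → ℝ) : Set (S → EReal) :=
  Set.range fun j => fun i => K A π i j

/-- The Martin space `ℳ`: closure of `𝒦` in the product topology. -/
def martin (A : S → S → EReal) (π : S → ℝ) : Set (S → EReal) :=
  closure (kerCols A π)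

/-- `μ_u(w)`: the limsup of `π_j + u_j` as `K_{·j} → w`. -/
def mu (A : S → S → EReal) (π : S → ℝ) (u : S → EReal) (w : S → EReal) : EReal :=
  ⨅ (W : Set (S → EReal)) (_ : W ∈ 𝓝 w),
    ⨆ (j : S) (_ : (fun i => K A π i j) ∈ W), ((π j : EReal) + u j)

/-- `w♭_i`: the liminf of `K♭_{ij}` as `K_{·j} → w`. -/
def flat (A : S → S → EReal) (π : S → ℝ) (w : S → EReal) (i : S) : EReal :=
  ⨆ (W : Set (S → EReal)) (_ : W ∈ 𝓝 w),
    ⨅ (j : S) (_ : (fun i' => K A π i' j) ∈ W), Kflat A π i j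

/-- The kernel `H(z,w) = μ_w(z)`. -/
def H (A : S → S → EReal) (π : S → ℝ) (z w : S → EReal) : EReal := mu A π w z

/-- The kernel `H♭(z,w) = μ_{w♭}(z)`. -/
def Hflat (A : S → S → EReal) (π : S → ℝ) (z w : S → EReal) : EReal :=
  mu A π (flat A π w) z

/-- The minimal Martin space `ℳᵐ = {w ∈ ℳ : H♭(w,w) = 0}`. -/
def martinMin (A : S → S → EReal) (π : S → ℝ) : Set (S → EReal) :=
  {w | w ∈ martin A π ∧ Hflat A π w w = 0}

/-- The maximal circuit mean `ρ(A)`. -/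
def maxCircuitMean (A : S → S → EReal) : EReal :=
  ⨆ (k : ℕ) (_ : 1 ≤ k) (p : ℕ → S) (_ : p k = p 0),
    (((k : ℝ)⁻¹ : ℝ) : EReal) * pathWeight A p k

/-- `α`-almost-geodesic with respect to the left super-harmonic vector `π`. -/
def IsAlmostGeodesic (A : S → S → EReal) (π : S → ℝ) (x : ℕ → S) : Prop :=
  ∃ α : ℝ, 0 ≤ α ∧ ∀ k : ℕ,
    (π (x k) : EReal) ≤ (α : EReal) + (π (x 0) : EReal) + pathWeight A x k

/-- The set `𝒮` of `π`-integrable super-harmonic vectors. -/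
def Sset (A : S → S → EReal) (π : S → ℝ) : Set (S → EReal) :=
  {u | (∀ i, u i ≠ ⊤) ∧ (∀ i, (⨆ j, A i j + u j) ≤ u i) ∧
    (⨆ j, ((π j : EReal) + u j)) < ⊤}

/-- The set `ℋ` of `π`-integrable harmonic vectors. -/
def Hset (A : S → S → EReal) (π : S → ℝ) : Set (S → EReal) :=
  {u | (∀ i, u i ≠ ⊤) ∧ (∀ i, (⨆ j, A i j + u j) = u i) ∧
    (⨆ j, ((π j : EReal) + u j)) < ⊤}

/-- A vector is normalised if `sup_j (π_j + u_j) = 0`. -/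
def Normalised (π : S → ℝ) (u : S → EReal) : Prop :=
  (⨆ j, ((π j : EReal) + u j)) = 0

/-- `ξ` is an extremal generator of `V`. -/
def ExtremalGen (V : Set (S → EReal)) (ξ : S → EReal) : Prop :=
  ξ ∈ V ∧ ξ ≠ (fun _ => (⊥ : EReal)) ∧
    ∀ u v, u ∈ V → v ∈ V → ξ = (fun i => u i ⊔ v i) → ξ = u ∨ ξ = v

end MaxPlus

/-!
Super-harmonicity of `π` bounds the weight of every path from `i` to `j` by `π j - π i`.
If the columns of `K` at `i ≠ j` agree, reading them at rows `i` and `j` (where `A*` vanishes)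
gives `A⁺ i j = π j - π i` and `A⁺ j i = π i - π j`, so the circuit `i → j → i` has weight `0`;
this makes `i` and `j` recurrent, and a zero-weight circuit forces `ρ(A) = 0`. Conversely, on a
zero-weight circuit the bounds `A⁺ i j ≤ π j - π i`, `A⁺ j i ≤ π i - π j` are attained, and
concatenating paths gives `A* x i + A⁺ i j ≤ A* x j` and `A* x j + A⁺ j i ≤ A* x i`: the columns
of `A*` at `i` and `j` differ by exactly `π j - π i`, which is what `K` subtracts.
-/

namespace EReal

lemma sub_coe_eq_sub_coe_iff {a b : EReal} {r s : ℝ} :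
    a - r = b - s ↔ b = a + ((s - r : ℝ) : EReal) := by
  have shift : ∀ c : EReal, c - r + s = c + ((s - r : ℝ) : EReal) := fun c => by
    rw [sub_eq_add_neg, add_assoc, ← coe_neg, ← coe_add, neg_add_eq_sub]
  constructor
  · intro h
    rw [← shift, h, EReal.sub_add_cancel]
  · rintro rfl
    rw [← shift, EReal.add_sub_cancel_right]

lemma eq_add_coe_of_le_of_add_neg_le {a b : EReal} {r : ℝ} (h₁ : a + r ≤ b)
    (h₂ : b + ((-r : ℝ) : EReal) ≤ a) : b = a + r := by
  refine le_antisymm ?_ h₁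
  have := (le_sub_iff_add_le (.inl (coe_ne_bot _)) (.inl (coe_ne_top _))).2 h₂
  rwa [sub_eq_add_neg, ← coe_neg, neg_neg] at this

lemma eq_coe_of_le_of_add_eq_zero {a b : EReal} {r : ℝ} (ha : a ≤ r)
    (hb : b ≤ ((-r : ℝ) : EReal)) (hab : a + b = 0) : a = r := by
  refine le_antisymm ha (not_lt.1 fun hlt => lt_irrefl (0 : EReal) ?_)
  calc (0 : EReal) = a + b := hab.symm
    _ ≤ a + ((-r : ℝ) : EReal) := add_le_add le_rfl hb
    _ < r + ((-r : ℝ) : EReal) := add_lt_add_right_coe hlt _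
    _ = 0 := by rw [← coe_add, add_neg_cancel, coe_zero]

lemma le_coe_mul_of_nonpos {w : EReal} {t : ℝ} (hw : w ≤ 0) (ht₀ : 0 < t) (ht₁ : t ≤ 1) :
    w ≤ t * w := by
  induction w using EReal.rec with
  | bot => rw [coe_mul_bot_of_pos ht₀]
  | coe w =>
    rw [← coe_mul, EReal.coe_le_coe_iff]
    have : w ≤ 0 := by exact_mod_cast hw
    nlinarith
  | top => exact absurd hw (by simp)

end EReal

namespace MaxPlus

section

variable {S : Type*} {A : S → S → EReal}

lemma pathWeight_zero (p : ℕ → S) : pathWeight A p 0 = 0 := by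
  simp [pathWeight]

lemma pathWeight_succ (p : ℕ → S) (n : ℕ) :
    pathWeight A p (n + 1) = pathWeight A p n + A (p n) (p (n + 1)) :=
  Finset.sum_range_succ _ _

/-- `p` up to time `n`, followed by `q`; a path when `q 0 = p n`. -/
def pathAppend (p q : ℕ → S) (n : ℕ) : ℕ → S :=
  fun k => if k ≤ n then p k else q (k - n)

lemma pathAppend_zero (p q : ℕ → S) (n : ℕ) : pathAppend p q n 0 = p 0 := by
  simp [pathAppend]

lemma pathAppend_add {p q : ℕ → S} {n : ℕ} (h : q 0 = p n) (k : ℕ) :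
    pathAppend p q n (n + k) = q k := by
  rcases k with _ | k
  · simp [pathAppend, h]
  · simp [pathAppend]

lemma pathWeight_pathAppend {p q : ℕ → S} {n : ℕ} (h : q 0 = p n) (m : ℕ) :
    pathWeight A (pathAppend p q n) (n + m) = pathWeight A p n + pathWeight A q m := by
  rw [pathWeight, Finset.sum_range_add]
  congr 1
  · refine Finset.sum_congr rfl fun k hk => ?_
    have hk : k < n := Finset.mem_range.1 hk
    simp [pathAppend, hk.le, Nat.succ_le_of_lt hk]
  · refine Finset.sum_congr rfl fun k _ => ?_
    rw [pathAppend_add h, add_assoc, pathAppend_add h]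

lemma pathWeight_le_star {p : ℕ → S} {n : ℕ} {i j : S} (h₀ : p 0 = i) (hn : p n = j) :
    pathWeight A p n ≤ star A i j :=
  le_iSup_of_le n (le_iSup_of_le p (le_iSup_of_le ⟨h₀, hn⟩ le_rfl))

lemma pathWeight_le_plus {p : ℕ → S} {n : ℕ} {i j : S} (hn₁ : 1 ≤ n) (h₀ : p 0 = i)
    (hn : p n = j) : pathWeight A p n ≤ plus A i j :=
  le_iSup_of_le n (le_iSup_of_le hn₁ (le_iSup_of_le p (le_iSup_of_le ⟨h₀, hn⟩ le_rfl)))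

lemma lt_star_iff {a : EReal} {i j : S} :
    a < star A i j ↔ ∃ n p, p 0 = i ∧ p n = j ∧ a < pathWeight A p n := by
  simp [star, lt_iSup_iff, and_assoc]

lemma lt_plus_iff {a : EReal} {i j : S} :
    a < plus A i j ↔ ∃ n, 1 ≤ n ∧ ∃ p, p 0 = i ∧ p n = j ∧ a < pathWeight A p n := by
  simp [plus, lt_iSup_iff, and_assoc]

lemma plus_le_star (i j : S) : plus A i j ≤ star A i j :=
  iSup_le fun _ => iSup_le fun _ => iSup_le fun _ => iSup_le fun hp => pathWeight_le_star hp.1 hp.2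

lemma star_eq_plus_of_ne {i j : S} (hij : i ≠ j) : star A i j = plus A i j := by
  refine le_antisymm (iSup_le fun n => iSup_le fun p => iSup_le fun hp => ?_) (plus_le_star i j)
  rcases n with _ | n
  · exact absurd (hp.1.symm.trans hp.2) hij
  · exact pathWeight_le_plus n.succ_pos hp.1 hp.2

lemma star_add_star_le (x i j : S) : star A x i + star A i j ≤ star A x j := by
  refine EReal.add_le_of_forall_lt fun a ha b hb => ?_
  obtain ⟨n, p, hp₀, hpn, hap⟩ := lt_star_iff.1 ha
  obtain ⟨m, q, hq₀, hqm, hbq⟩ := lt_star_iff.1 hb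
  have hqp : q 0 = p n := hq₀.trans hpn.symm
  calc a + b ≤ pathWeight A p n + pathWeight A q m := add_le_add hap.le hbq.le
    _ = pathWeight A (pathAppend p q n) (n + m) := (pathWeight_pathAppend hqp m).symm
    _ ≤ star A x j :=
      pathWeight_le_star ((pathAppend_zero p q n).trans hp₀) ((pathAppend_add hqp m).trans hqm)

lemma plus_add_plus_le (x i j : S) : plus A x i + plus A i j ≤ plus A x j := by
  refine EReal.add_le_of_forall_lt fun a ha b hb => ?_
  obtain ⟨n, -, p, hp₀, hpn, hap⟩ := lt_plus_iff.1 ha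
  obtain ⟨m, hm, q, hq₀, hqm, hbq⟩ := lt_plus_iff.1 hb
  have hqp : q 0 = p n := hq₀.trans hpn.symm
  calc a + b ≤ pathWeight A p n + pathWeight A q m := add_le_add hap.le hbq.le
    _ = pathWeight A (pathAppend p q n) (n + m) := (pathWeight_pathAppend hqp m).symm
    _ ≤ plus A x j := pathWeight_le_plus (by omega) ((pathAppend_zero p q n).trans hp₀)
      ((pathAppend_add hqp m).trans hqm)

lemma K_eq_K_iff_star_eq {π : S → ℝ} {x i j : S} :
    K A π x i = K A π x j ↔ star A x j = star A x i + ((π j - π i : ℝ) : EReal) :=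
  EReal.sub_coe_eq_sub_coe_iff

namespace LeftSuperharmonic

variable {π : S → ℝ}

lemma add_le (hπ : LeftSuperharmonic A π) (i j : S) : (π i : EReal) + A i j ≤ π j :=
  (le_iSup (fun i => (π i : EReal) + A i j) i).trans (hπ j)

lemma add_pathWeight_le (hπ : LeftSuperharmonic A π) (p : ℕ → S) (n : ℕ) :
    (π (p 0) : EReal) + pathWeight A p n ≤ π (p n) := by
  induction n with
  | zero => simp [pathWeight_zero]
  | succ n ih =>
    rw [pathWeight_succ, ← add_assoc]
    exact (add_le_add ih le_rfl).trans (hπ.add_le _ _)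

lemma pathWeight_le (hπ : LeftSuperharmonic A π) (p : ℕ → S) (n : ℕ) :
    pathWeight A p n ≤ ((π (p n) - π (p 0) : ℝ) : EReal) := by
  rw [EReal.coe_sub, EReal.le_sub_iff_add_le (.inl (EReal.coe_ne_bot _))
    (.inl (EReal.coe_ne_top _)), add_comm]
  exact hπ.add_pathWeight_le p n

lemma star_le (hπ : LeftSuperharmonic A π) (i j : S) :
    star A i j ≤ ((π j - π i : ℝ) : EReal) :=
  iSup_le fun n => iSup_le fun p => iSup_le fun hp => hp.1 ▸ hp.2 ▸ hπ.pathWeight_le p n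

lemma plus_le (hπ : LeftSuperharmonic A π) (i j : S) :
    plus A i j ≤ ((π j - π i : ℝ) : EReal) :=
  (plus_le_star i j).trans (hπ.star_le i j)

lemma star_self_eq_zero (hπ : LeftSuperharmonic A π) (i : S) : star A i i = 0 := by
  refine le_antisymm (by simpa using hπ.star_le i i) ?_
  simpa [pathWeight_zero] using pathWeight_le_star (A := A) (p := fun _ => i) (n := 0) rfl rfl

lemma plus_self_eq_zero_of_plus_add_plus_eq_zero (hπ : LeftSuperharmonic A π) {i j : S}
    (h : plus A i j + plus A j i = 0) : plus A i i = 0 :=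
  le_antisymm (by simpa using hπ.plus_le i i) (h ▸ plus_add_plus_le i j i)

lemma plus_eq_of_plus_add_plus_eq_zero (hπ : LeftSuperharmonic A π) {i j : S}
    (h : plus A i j + plus A j i = 0) : plus A i j = ((π j - π i : ℝ) : EReal) :=
  EReal.eq_coe_of_le_of_add_eq_zero (hπ.plus_le i j) (by simpa using hπ.plus_le j i) h

lemma star_eq_star_add_of_plus_add_plus_eq_zero (hπ : LeftSuperharmonic A π) {i j : S}
    (h : plus A i j + plus A j i = 0) (x : S) :
    star A x j = star A x i + ((π j - π i : ℝ) : EReal) := by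
  refine EReal.eq_add_coe_of_le_of_add_neg_le ?_ ?_
  · rw [← hπ.plus_eq_of_plus_add_plus_eq_zero h]
    exact (add_le_add le_rfl (plus_le_star i j)).trans (star_add_star_le x i j)
  · rw [neg_sub, ← hπ.plus_eq_of_plus_add_plus_eq_zero ((add_comm _ _).trans h)]
    exact (add_le_add le_rfl (plus_le_star j i)).trans (star_add_star_le x j i)

lemma maxCircuitMean_le_zero (hπ : LeftSuperharmonic A π) : maxCircuitMean A ≤ 0 :=
  iSup_le fun k => iSup_le fun _ => iSup_le fun p => iSup_le fun hp => by
    have hw : pathWeight A p k ≤ 0 := by simpa [hp] using hπ.pathWeight_le p k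
    exact mul_nonpos_of_nonneg_of_nonpos (EReal.coe_nonneg.2 (by positivity)) hw

/-- A circuit has nonpositive weight, which its mean can only increase. -/
lemma plus_self_le_maxCircuitMean (hπ : LeftSuperharmonic A π) (i : S) :
    plus A i i ≤ maxCircuitMean A :=
  iSup_le fun k => iSup_le fun hk => iSup_le fun p => iSup_le fun hp => by
    have hw : pathWeight A p k ≤ 0 := by simpa [hp.1, hp.2] using hπ.pathWeight_le p k
    have hk' : (1 : ℝ) ≤ k := by exact_mod_cast hk
    refine (EReal.le_coe_mul_of_nonpos hw (by positivity) (inv_le_one_of_one_le₀ hk')).trans ?_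
    exact le_iSup_of_le k (le_iSup_of_le hk (le_iSup_of_le p
      (le_iSup_of_le (hp.2.trans hp.1.symm) le_rfl)))

lemma maxCircuitMean_eq_zero_of_plus_self_eq_zero (hπ : LeftSuperharmonic A π) {i : S}
    (h : plus A i i = 0) : maxCircuitMean A = 0 :=
  le_antisymm hπ.maxCircuitMean_le_zero (h ▸ hπ.plus_self_le_maxCircuitMean i)

end LeftSuperharmonic

end

theorem martin_columns_eq_iff_general {S : Type*} (A : S → S → EReal)
    (π : S → ℝ) (hπ : LeftSuperharmonic A π)
    (i j : S) (hij : i ≠ j) :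
    (fun x => K A π x i) = (fun x => K A π x j) ↔
      (maxCircuitMean A = 0 ∧ plus A i i = 0 ∧ plus A j j = 0 ∧
        plus A i j + plus A j i = 0) := by
  constructor
  · intro h
    have hij' : plus A i j = ((π j - π i : ℝ) : EReal) := by
      simpa [← star_eq_plus_of_ne hij, hπ.star_self_eq_zero] using K_eq_K_iff_star_eq.1 (congrFun h i)
    have hji' : plus A j i = ((π i - π j : ℝ) : EReal) := by
      simpa [← star_eq_plus_of_ne hij.symm, hπ.star_self_eq_zero]
        using K_eq_K_iff_star_eq.1 (congrFun h j).symm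
    have hsum : plus A i j + plus A j i = 0 := by
      rw [hij', hji', ← EReal.coe_add, sub_add_sub_cancel, sub_self, EReal.coe_zero]
    have hii := hπ.plus_self_eq_zero_of_plus_add_plus_eq_zero hsum
    have hjj := hπ.plus_self_eq_zero_of_plus_add_plus_eq_zero ((add_comm _ _).trans hsum)
    exact ⟨hπ.maxCircuitMean_eq_zero_of_plus_self_eq_zero hii, hii, hjj, hsum⟩
  · rintro ⟨-, -, -, hsum⟩
    funext x
    exact K_eq_K_iff_star_eq.2 (hπ.star_eq_star_add_of_plus_add_plus_eq_zero hsum x)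

/-- for distinct `i, j`, the columns `K_{·i}` and `K_{·j}` of the Martin kernel
coincide iff `ρ(A) = 0`, both `i` and `j` are recurrent, and they lie in the same
recurrence class. -/
theorem martin_columns_eq_iff {S : Type*} (A : S → S → EReal)
    (hA : ∀ i j, A i j ≠ ⊤) (π : S → ℝ) (hπ : LeftSuperharmonic A π)
    (i j : S) (hij : i ≠ j) :
    (fun x => K A π x i) = (fun x => K A π x j) ↔
      (maxCircuitMean A = 0 ∧ plus A i i = 0 ∧ plus A j j = 0 ∧
        plus A i j + plus A j i = 0) :=
  martin_columns_eq_iff_general A π hπ i j hij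

end MaxPlus
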